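/- arXiv:2502.06732 — 2 statements merged into one kernel-verified Lean document; each statement's English description precedes it below -/
import Mathlib

section
/- Let ζ = exp(2πi/36). Then |ζ⁹ − ζ³ + ζ| = 2·cos(2π/9) · |ζ¹¹ − ζ⁷ + ζ⁵ − ζ³ + ζ|. -/
/-!
With `ζ = e^{2πi/36}` one has `ζ¹² − ζ⁶ + 1 = 0` (the 36th cyclotomic polynomial), and modulo
this relation `(ζ⁴ + ζ³²)(ζ¹¹ − ζ⁷ + ζ⁵ − ζ³ + ζ) = ζ⁹ − ζ³ + ζ`. Since `ζ³² = ζ⁻⁴` and `|ζ| = 1`,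
the first factor is the nonnegative real number `2 cos(2π/9)`.
-/

open Complex

theorem isPrimitiveRoot_exp_two_pi_I_div_36 : IsPrimitiveRoot (exp (2 * Real.pi * I / 36)) 36 := by
  exact_mod_cast isPrimitiveRoot_exp 36 (by norm_num)

theorem IsPrimitiveRoot.pow_twelve_sub_pow_six_add_one_eq_zero {R : Type*} [CommRing R]
    [IsDomain R] {ζ : R} (hζ : IsPrimitiveRoot ζ 36) : ζ ^ 12 - ζ ^ 6 + 1 = 0 := by
  have h18 : ζ ^ 18 = -1 := (hζ.pow_of_dvd (by norm_num) (by norm_num)).eq_neg_one_of_two_right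
  have h6 : ζ ^ 6 + 1 ≠ 0 := by
    intro h
    have h12 : ζ ^ 12 = 1 := by
      rw [show ζ ^ 12 = (ζ ^ 6) ^ 2 by ring, eq_neg_of_add_eq_zero_left h]; ring
    exact hζ.pow_ne_one_of_pos_of_lt (by norm_num) (by norm_num) h12
  refine (mul_eq_zero.mp ?_).resolve_left h6
  linear_combination h18

theorem pow_four_add_pow_thirtyTwo_mul_eq {R : Type*} [CommRing R] {x : R}
    (hx : x ^ 12 - x ^ 6 + 1 = 0) :
    (x ^ 4 + x ^ 32) * (x ^ 11 - x ^ 7 + x ^ 5 - x ^ 3 + x) = x ^ 9 - x ^ 3 + x := by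
  linear_combination (-x + x^3 + x^5 - 2*x^7 + x^9 - x^13 + x^15 - x^17 + x^19
    - x^23 + 2*x^25 - x^27 + x^31) * hx

theorem exp_two_pi_I_div_36_pow_four_add_pow_thirtyTwo :
    exp (2 * Real.pi * I / 36) ^ 4 + exp (2 * Real.pi * I / 36) ^ 32
      = ((2 * Real.cos (2 * Real.pi / 9) : ℝ) : ℂ) := by
  set ζ := exp (2 * Real.pi * I / 36)
  have h4 : ζ ^ 4 = exp (((2 * Real.pi / 9 : ℝ) : ℂ) * I) := by
    rw [← exp_nat_mul]; congr 1; push_cast; ring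
  have h32 : ζ ^ 32 = (ζ ^ 4)⁻¹ := by
    refine eq_inv_of_mul_eq_one_right ?_
    rw [← pow_add]
    exact isPrimitiveRoot_exp_two_pi_I_div_36.pow_eq_one
  rw [h32, h4, ← exp_neg, ← neg_mul]
  push_cast
  rw [two_cos]

/-- For `ζ = e^{2πi/36}`: `|ζ⁹ − ζ³ + ζ| = 2 cos(2π/9) · |ζ¹¹ − ζ⁷ + ζ⁵ − ζ³ + ζ|`. -/
theorem stmt11 (ζ : ℂ) (hζ : ζ = Complex.exp (2 * Real.pi * Complex.I / 36)) :
    ‖ζ^9 - ζ^3 + ζ‖ =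
      2 * Real.cos (2 * Real.pi / 9) * ‖ζ^11 - ζ^7 + ζ^5 - ζ^3 + ζ‖ := by
  have hroot : IsPrimitiveRoot ζ 36 := hζ ▸ isPrimitiveRoot_exp_two_pi_I_div_36
  have hcos : 0 ≤ 2 * Real.cos (2 * Real.pi / 9) := by
    have := Real.cos_nonneg_of_mem_Icc (x := 2 * Real.pi / 9)
      ⟨by linarith [Real.pi_pos], by linarith [Real.pi_pos]⟩
    linarith
  rw [← pow_four_add_pow_thirtyTwo_mul_eq hroot.pow_twelve_sub_pow_six_add_one_eq_zero, norm_mul,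
    hζ, exp_two_pi_I_div_36_pow_four_add_pow_thirtyTwo, norm_real, Real.norm_of_nonneg hcos]
end

section
/- Let ζ = exp(2πi/36). Then |−ζ¹¹ + ζ⁹ − ζ⁷| = 2·cos(π/18) · |ζ¹¹ − ζ⁷ + ζ⁵ − ζ³ + ζ|. -/
/-! `ζ⁶` is a primitive sixth root of unity, so `ζ¹² − ζ⁶ + 1 = 0`; modulo this relation
`−ζ¹¹ + ζ⁹ − ζ⁷ = −(ζ² + 1)(ζ¹¹ − ζ⁷ + ζ⁵ − ζ³ + ζ)`. Since `ζ = e^{iπ/18}` lies on the unit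
circle, `‖ζ² + 1‖ = ‖ζ + ζ⁻¹‖ = 2 cos(π/18)`. -/

open Polynomial Complex

theorem IsPrimitiveRoot.sq_sub_self_add_one_eq_zero {R : Type*} [CommRing R] [IsDomain R]
    {ω : R} (h : IsPrimitiveRoot ω 6) : ω ^ 2 - ω + 1 = 0 := by
  simpa [cyclotomic_six] using h.isRoot_cyclotomic (by norm_num)

theorem neg_pow_eleven_add_pow_nine_sub_pow_seven {R : Type*} [CommRing R] {z : R}
    (hz : z ^ 12 - z ^ 6 + 1 = 0) :
    -z ^ 11 + z ^ 9 - z ^ 7 = -(z ^ 2 + 1) * (z ^ 11 - z ^ 7 + z ^ 5 - z ^ 3 + z) := by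
  linear_combination z * hz

theorem Complex.norm_exp_mul_I_sq_add_one (θ : ℝ) :
    ‖exp (θ * I) ^ 2 + 1‖ = 2 * |Real.cos θ| := by
  have h : exp (θ * I) ^ 2 + 1 = exp (θ * I) * (2 * Real.cos θ : ℝ) := by
    rw [ofReal_mul, ofReal_cos, Complex.cos, neg_mul, exp_neg]
    field_simp [exp_ne_zero]
    push_cast; ring
  rw [h, norm_mul, norm_exp_ofReal_mul_I, norm_real, Real.norm_eq_abs, abs_mul, abs_two, one_mul]

/-- For `ζ = e^{2πi/36}`: `|−ζ¹¹ + ζ⁹ − ζ⁷| = 2 cos(π/18) · |ζ¹¹ − ζ⁷ + ζ⁵ − ζ³ + ζ|`. -/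
theorem stmt12 (ζ : ℂ) (hζ : ζ = Complex.exp (2 * Real.pi * Complex.I / 36)) :
    ‖-ζ^11 + ζ^9 - ζ^7‖ =
      2 * Real.cos (Real.pi / 18) * ‖ζ^11 - ζ^7 + ζ^5 - ζ^3 + ζ‖ := by
  have hprim : IsPrimitiveRoot (ζ ^ 6) 6 := by
    simpa using (hζ ▸ isPrimitiveRoot_exp 36 (by norm_num)).pow_of_dvd (p := 6) (by norm_num)
      (by norm_num)
  have hcyc : ζ ^ 12 - ζ ^ 6 + 1 = 0 := by
    linear_combination hprim.sq_sub_self_add_one_eq_zero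
  have hζ' : ζ = exp ((Real.pi / 18 : ℝ) * I) := by
    rw [hζ]; push_cast; ring_nf
  have hcos : 0 ≤ Real.cos (Real.pi / 18) :=
    Real.cos_nonneg_of_mem_Icc ⟨by linarith [Real.pi_pos], by linarith [Real.pi_pos]⟩
  rw [neg_pow_eleven_add_pow_nine_sub_pow_seven hcyc, norm_mul, norm_neg, hζ',
    norm_exp_mul_I_sq_add_one, abs_of_nonneg hcos]
end
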